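/- arXiv:gr-qc/0606009 — 8 statements merged into one kernel-verified Lean document; each statement's English description precedes it below -/
import Mathlib

section
/- For any twice continuously differentiable functions f, φ : ℝ → ℝ, the identity 2 f² φ φ'' + (φ (f²φ)' − f²φφ')' = 2 (fφ (fφ)')' − 2 ((fφ)')² + 2 φ² (f')² holds pointwise. -/
/-! The left-hand side rearranges to `2 f² φ φ'' + (2 f f' φ²)'`, since `φ (f²φ)' − f²φφ' = 2 f f' φ²`.
Writing `g = fφ`, the right-hand side is `2 g g'' + 2 φ² f'²` because `(g g')' = g'² + g g''`.
Expanding `g'' = f''φ + 2 f'φ' + fφ''` and `(f f')' = f'² + f f''` makes both sides equal. -/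

section

variable {f g φ : ℝ → ℝ} {x : ℝ}

theorem deriv_mul_deriv_self (hg : DifferentiableAt ℝ g x) (hg' : DifferentiableAt ℝ (deriv g) x) :
    deriv (fun l => g l * deriv g l) x = deriv g x ^ 2 + g x * deriv (deriv g) x := by
  rw [deriv_fun_mul hg hg']
  ring

theorem deriv_deriv_mul (hf : Differentiable ℝ f) (hφ : Differentiable ℝ φ)
    (hf' : DifferentiableAt ℝ (deriv f) x) (hφ' : DifferentiableAt ℝ (deriv φ) x) :
    deriv (deriv fun l => f l * φ l) x
      = deriv (deriv f) x * φ x + 2 * deriv f x * deriv φ x + f x * deriv (deriv φ) x := by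
  have hderiv : deriv (fun l => f l * φ l) = fun l => deriv f l * φ l + f l * deriv φ l :=
    funext fun l => deriv_fun_mul (hf l) (hφ l)
  rw [hderiv, deriv_fun_add (hf'.fun_mul (hφ x)) ((hf x).fun_mul hφ'),
    deriv_fun_mul hf' (hφ x), deriv_fun_mul (hf x) hφ']
  ring

theorem mul_deriv_sq_mul_sub (hf : Differentiable ℝ f) (hφ : Differentiable ℝ φ) :
    (fun l => φ l * deriv (fun m => f m ^ 2 * φ m) l - f l ^ 2 * φ l * deriv φ l)
      = fun l => 2 * (f l * deriv f l) * φ l ^ 2 := by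
  funext l
  rw [deriv_fun_mul ((hf l).fun_pow 2) (hφ l), deriv_fun_pow (hf l) 2]
  ring

end

theorem stmt_0 (f φ : ℝ → ℝ) (hf : ContDiff ℝ 2 f) (hφ : ContDiff ℝ 2 φ) :
    ∀ x : ℝ,
      2 * (f x)^2 * φ x * deriv (deriv φ) x
        + deriv (fun l => φ l * deriv (fun m => (f m)^2 * φ m) l
            - (f l)^2 * φ l * deriv φ l) x
      = 2 * deriv (fun l => f l * φ l * deriv (fun m => f m * φ m) l) x
        - 2 * (deriv (fun l => f l * φ l) x)^2
        + 2 * (φ x)^2 * (deriv f x)^2 := by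
  intro x
  have hf₁ := hf.differentiable two_ne_zero
  have hφ₁ := hφ.differentiable two_ne_zero
  have hf₂ := hf.differentiable_deriv_two
  have hφ₂ := hφ.differentiable_deriv_two
  have hfφ₂ := (hf.mul hφ).differentiable_deriv_two
  rw [mul_deriv_sq_mul_sub hf₁ hφ₁,
    deriv_fun_mul (((hf₁ x).fun_mul (hf₂ x)).const_mul 2) ((hφ₁ x).fun_pow 2),
    deriv_const_mul _ ((hf₁ x).fun_mul (hf₂ x)), deriv_mul_deriv_self (hf₁ x) (hf₂ x),
    deriv_fun_pow (hφ₁ x) 2,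
    deriv_mul_deriv_self (g := fun m => f m * φ m) ((hf₁ x).fun_mul (hφ₁ x)) (hfφ₂ x),
    deriv_deriv_mul hf₁ hφ₁ (hf₂ x) (hφ₂ x), deriv_fun_mul (hf₁ x) (hφ₁ x)]
  ring
end

section
/- Let f : ℝ → ℝ be C² with compact support, φ : ℝ → ℝ be C², and 0 ≤ ξ ≤ 1/4. Define the energy density along a null geodesic in flat space, T(λ) = (1−2ξ)(φ'(λ))² − 2ξ φ(λ) φ''(λ). Then ∫ T(λ) f(λ)² dλ ≥ −2ξ ∫ φ(λ)² (f'(λ))² dλ. -/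
/-!
Since `φ φ' f²` has compact support, its derivative `φ'² f² + φ φ'' f² + 2 φ φ' f f'` integrates
to zero. Adding `2ξ` times it to the integrand of `∫ T f² + 2ξ ∫ φ² f'²` and completing the square
gives `∫ (φ' f + 2ξ φ f')² + 2ξ(1 - 2ξ) ∫ (φ f')²`, which is nonnegative when `0 ≤ ξ ≤ 1/4`.
-/

open MeasureTheory

section

variable {E : Type*} [NormedAddCommGroup E] [NormedSpace ℝ E] {f f' : ℝ → E}

theorem HasCompactSupport.integrable_of_hasDerivAt (hf : HasCompactSupport f)
    (hderiv : ∀ x, HasDerivAt f (f' x) x) (hf' : Continuous f') : Integrable f' :=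
  hf'.integrable_of_hasCompactSupport (funext (fun x ↦ (hderiv x).deriv) ▸ hf.deriv)

theorem HasCompactSupport.integral_eq_zero_of_hasDerivAt (hf : HasCompactSupport f)
    (hderiv : ∀ x, HasDerivAt f (f' x) x) (hf' : Continuous f') : ∫ x, f' x = 0 :=
  integral_eq_zero_of_hasDerivAt_of_integrable hderiv (hf.integrable_of_hasDerivAt hderiv hf')
    ((continuous_iff_continuousAt.2 fun x ↦ (hderiv x).continuousAt).integrable_of_hasCompactSupport
      hf)

end

theorem HasCompactSupport.sq {f : ℝ → ℝ} (hf : HasCompactSupport f) :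
    HasCompactSupport fun x ↦ f x ^ 2 :=
  hf.comp_left (g := fun t : ℝ ↦ t ^ 2) (zero_pow two_ne_zero)

theorem Continuous.integrable_mul_sq {u v : ℝ → ℝ} (hu : Continuous u) (hv : Continuous v)
    (hvc : HasCompactSupport v) : Integrable fun x ↦ u x * v x ^ 2 :=
  (hu.mul (hv.pow 2)).integrable_of_hasCompactSupport hvc.sq.mul_left

theorem hasDerivAt_mul_deriv_mul_sq {φ u : ℝ → ℝ} {x : ℝ} (hφ : ContDiff ℝ 2 φ)
    (hu : DifferentiableAt ℝ u x) :
    HasDerivAt (fun l ↦ φ l * deriv φ l * u l ^ 2) (deriv φ x ^ 2 * u x ^ 2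
      + φ x * deriv (deriv φ) x * u x ^ 2 + 2 * φ x * deriv φ x * u x * deriv u x) x := by
  have hφ₀ : HasDerivAt φ (deriv φ x) x := (hφ.differentiable two_ne_zero x).hasDerivAt
  have hφ₁ : HasDerivAt (deriv φ) (deriv (deriv φ) x) x :=
    ((hφ.deriv' (n := 1)).differentiable one_ne_zero x).hasDerivAt
  refine ((hφ₀.fun_mul hφ₁).fun_mul (hu.hasDerivAt.fun_pow 2)).congr_deriv ?_
  push_cast
  ring

theorem null_energy_integrand_nonneg {ξ : ℝ} (hξ0 : 0 ≤ ξ) (hξ1 : ξ ≤ 1 / 4)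
    (p p' p'' u u' : ℝ) :
    0 ≤ ((1 - 2 * ξ) * p' ^ 2 - 2 * ξ * p * p'') * u ^ 2 + 2 * ξ * (p ^ 2 * u' ^ 2)
      + 2 * ξ * (p' ^ 2 * u ^ 2 + p * p'' * u ^ 2 + 2 * p * p' * u * u') := by
  have hsq : ((1 - 2 * ξ) * p' ^ 2 - 2 * ξ * p * p'') * u ^ 2 + 2 * ξ * (p ^ 2 * u' ^ 2)
      + 2 * ξ * (p' ^ 2 * u ^ 2 + p * p'' * u ^ 2 + 2 * p * p' * u * u')
      = (p' * u + 2 * ξ * p * u') ^ 2 + 2 * ξ * (1 - 2 * ξ) * (p * u') ^ 2 := by ring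
  have hcoef : 0 ≤ 2 * ξ * (1 - 2 * ξ) := mul_nonneg (by linarith) (by linarith)
  rw [hsq]
  positivity

theorem stmt_2 (f φ : ℝ → ℝ) (hf : ContDiff ℝ 2 f) (hfc : HasCompactSupport f)
    (hφ : ContDiff ℝ 2 φ) (ξ : ℝ) (hξ0 : 0 ≤ ξ) (hξ1 : ξ ≤ 1/4)
    (T : ℝ → ℝ)
    (hT : ∀ l, T l = (1 - 2*ξ) * (deriv φ l)^2 - 2 * ξ * φ l * deriv (deriv φ) l) :
    (∫ l : ℝ, T l * (f l)^2) ≥ -2 * ξ * ∫ l : ℝ, (φ l)^2 * (deriv f l)^2 := by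
  obtain rfl : T = _ := funext hT
  have hφ' : ContDiff ℝ 1 (deriv φ) := hφ.deriv'
  have hφ₀ : Continuous φ := hφ.continuous
  have hφ₁ : Continuous (deriv φ) := hφ'.continuous
  have hφ₂ : Continuous (deriv (deriv φ)) := hφ'.continuous_deriv le_rfl
  have hf₀ : Continuous f := hf.continuous
  have hf₁ : Continuous (deriv f) := (hf.deriv' (n := 1)).continuous
  have hg : ∀ x, HasDerivAt (fun l ↦ φ l * deriv φ l * f l ^ 2) _ x := fun x ↦
    hasDerivAt_mul_deriv_mul_sq hφ (hf.differentiable two_ne_zero x)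
  have hg'_cont : Continuous fun x ↦ deriv φ x ^ 2 * f x ^ 2
      + φ x * deriv (deriv φ) x * f x ^ 2 + 2 * φ x * deriv φ x * f x * deriv f x := by fun_prop
  have hboundary := hfc.sq.mul_left.integral_eq_zero_of_hasDerivAt hg hg'_cont
  have hTf_int := (by fun_prop : Continuous fun l ↦
      (1 - 2 * ξ) * deriv φ l ^ 2 - 2 * ξ * φ l * deriv (deriv φ) l).integrable_mul_sq hf₀ hfc
  have hφf'_int := (by fun_prop : Continuous fun l ↦ φ l ^ 2).integrable_mul_sq hf₁ hfc.deriv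
  have hg'_int := hfc.sq.mul_left.integrable_of_hasDerivAt hg hg'_cont
  have hnonneg : (0 : ℝ) ≤ ∫ l : ℝ, _ := integral_nonneg fun l ↦
    null_energy_integrand_nonneg hξ0 hξ1 (φ l) (deriv φ l) (deriv (deriv φ) l) (f l) (deriv f l)
  rw [integral_add (hTf_int.fun_add (hφf'_int.const_mul _)) (hg'_int.const_mul _),
    integral_add hTf_int (hφf'_int.const_mul _), integral_const_mul, integral_const_mul,
    hboundary] at hnonneg
  linarith
end

section
/- Let f : ℝ → ℝ be C² with compact support, φ : ℝ → ℝ be C², m ≥ 0 a constant, and 0 ≤ ξ ≤ 1/4. Define T(λ) = (1−2ξ)(φ')² + (1/2)(1−4ξ) m² φ² − 2ξ φ φ''. Then ∫ T f² dλ ≥ −2ξ ∫ φ² (f')² dλ. -/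
open MeasureTheory

/-!
With `g = f² φ φ'`, the pointwise identity
`T f² + 2ξ φ² f'² + 2ξ g' = (1 - 2ξ) (φ' f)² + ½ (1 - 4ξ) m² (φ f)² + 2ξ ((φ f)')²`
has a nonnegative right-hand side for `0 ≤ ξ ≤ 1/4`, and `∫ g' = 0` because `g` has compact
support.
-/

lemma HasCompactSupport.of_eq_zero_of_deriv_eq_zero {𝕜 F G : Type*} [NontriviallyNormedField 𝕜]
    [NormedAddCommGroup F] [NormedSpace 𝕜 F] [Zero G] {f : 𝕜 → F} {h : 𝕜 → G}
    (hf : HasCompactSupport f) (h0 : ∀ x, f x = 0 → deriv f x = 0 → h x = 0) :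
    HasCompactSupport h := by
  refine hf.mono' fun x hx ↦ by_contra fun hxf ↦ hx (h0 x ?_ ?_)
  · exact image_eq_zero_of_notMem_tsupport hxf
  · exact Function.notMem_support.mp fun hx' ↦ hxf (support_deriv_subset hx')

lemma HasCompactSupport.integrable_of_eq_zero_of_deriv_eq_zero {E : Type*}
    [NormedAddCommGroup E] {f : ℝ → ℝ} {h : ℝ → E} (hf : HasCompactSupport f)
    (hh : Continuous h) (h0 : ∀ x, f x = 0 → deriv f x = 0 → h x = 0) : Integrable h :=
  hh.integrable_of_hasCompactSupport (hf.of_eq_zero_of_deriv_eq_zero h0)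

lemma hasDerivAt_sq_mul_mul_deriv {f φ : ℝ → ℝ} (hf : Differentiable ℝ f)
    (hφ : Differentiable ℝ φ) (hφ' : Differentiable ℝ (deriv φ)) (x : ℝ) :
    HasDerivAt (fun l ↦ f l ^ 2 * φ l * deriv φ l)
      (2 * f x * deriv f x * φ x * deriv φ x + f x ^ 2 * deriv φ x ^ 2
        + f x ^ 2 * φ x * deriv (deriv φ) x) x := by
  refine ((((hf x).hasDerivAt.pow 2).mul (hφ x).hasDerivAt).mul (hφ' x).hasDerivAt).congr_deriv ?_
  simp only [Pi.pow_apply, Pi.mul_apply, Nat.cast_ofNat, Nat.add_one_sub_one, pow_one]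
  ring

lemma energy_density_add_nonneg {m ξ : ℝ} (hξ0 : 0 ≤ ξ) (hξ1 : ξ ≤ 1 / 4)
    (f f' φ φ' φ'' : ℝ) :
    0 ≤ ((1 - 2 * ξ) * φ' ^ 2 + 1 / 2 * (1 - 4 * ξ) * m ^ 2 * φ ^ 2 - 2 * ξ * φ * φ'') * f ^ 2
      + 2 * ξ * (φ ^ 2 * f' ^ 2)
      + 2 * ξ * (2 * f * f' * φ * φ' + f ^ 2 * φ' ^ 2 + f ^ 2 * φ * φ'') := by
  have h2ξ : 0 ≤ 1 - 2 * ξ := by linarith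
  have h4ξ : 0 ≤ 1 - 4 * ξ := by linarith
  have hsq : 0 ≤ (1 - 2 * ξ) * (φ' * f) ^ 2 + 1 / 2 * (1 - 4 * ξ) * m ^ 2 * (φ * f) ^ 2
      + 2 * ξ * (φ' * f + φ * f') ^ 2 := by positivity
  linarith

theorem stmt_3_general (f φ : ℝ → ℝ) (hf : ContDiff ℝ 2 f) (hfc : HasCompactSupport f)
    (hφ : ContDiff ℝ 2 φ) (m ξ : ℝ) (hξ0 : 0 ≤ ξ) (hξ1 : ξ ≤ 1/4)
    (T : ℝ → ℝ)
    (hT : ∀ l, T l = (1 - 2*ξ) * (deriv φ l)^2 + (1/2) * (1 - 4*ξ) * m^2 * (φ l)^2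
        - 2 * ξ * φ l * deriv (deriv φ) l) :
    (∫ l : ℝ, T l * (f l)^2) ≥ -2 * ξ * ∫ l : ℝ, (φ l)^2 * (deriv f l)^2 := by
  have hφ' : ContDiff ℝ 1 (deriv φ) := hφ.deriv'
  have hf'c := hf.continuous_deriv one_le_two
  have hφc := hφ.continuous
  have hφ'c := hφ'.continuous
  have hφ''c := hφ'.continuous_deriv le_rfl
  have hTc : Continuous T := by rw [funext hT]; fun_prop
  have hg := hasDerivAt_sq_mul_mul_deriv (hf.differentiable two_ne_zero)
    (hφ.differentiable two_ne_zero) (hφ'.differentiable one_ne_zero)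
  set g' : ℝ → ℝ := fun x ↦ 2 * f x * deriv f x * φ x * deriv φ x
      + f x ^ 2 * deriv φ x ^ 2 + f x ^ 2 * φ x * deriv (deriv φ) x
  have hg'i : Integrable g' := hfc.integrable_of_eq_zero_of_deriv_eq_zero (by fun_prop)
    fun x hx _ ↦ by simp [g', hx]
  have hg'0 : ∫ x, g' x = 0 := integral_eq_zero_of_hasDerivAt_of_integrable hg hg'i
    (hfc.integrable_of_eq_zero_of_deriv_eq_zero (by fun_prop) fun x hx _ ↦ by simp [hx])
  have hTf : Integrable fun l ↦ T l * f l ^ 2 :=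
    hfc.integrable_of_eq_zero_of_deriv_eq_zero (by fun_prop) fun x hx _ ↦ by simp [hx]
  have hφf : Integrable fun l ↦ φ l ^ 2 * deriv f l ^ 2 :=
    hfc.integrable_of_eq_zero_of_deriv_eq_zero (by fun_prop) fun x _ hx' ↦ by simp [hx']
  have hsum : 0 ≤ ∫ l, T l * f l ^ 2 + 2 * ξ * (φ l ^ 2 * deriv f l ^ 2) + 2 * ξ * g' l :=
    integral_nonneg fun l ↦ by
      rw [hT l]
      exact energy_density_add_nonneg hξ0 hξ1 _ _ _ _ _
  rw [integral_add, integral_add, integral_const_mul, integral_const_mul, hg'0] at hsum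
  · linarith
  exacts [hTf, hφf.const_mul _, hTf.add (hφf.const_mul _), hg'i.const_mul _]

theorem stmt_3 (f φ : ℝ → ℝ) (hf : ContDiff ℝ 2 f) (hfc : HasCompactSupport f)
    (hφ : ContDiff ℝ 2 φ) (m ξ : ℝ) (hm : 0 ≤ m) (hξ0 : 0 ≤ ξ) (hξ1 : ξ ≤ 1/4)
    (T : ℝ → ℝ)
    (hT : ∀ l, T l = (1 - 2*ξ) * (deriv φ l)^2 + (1/2) * (1 - 4*ξ) * m^2 * (φ l)^2
        - 2 * ξ * φ l * deriv (deriv φ) l) :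
    (∫ l : ℝ, T l * (f l)^2) ≥ -2 * ξ * ∫ l : ℝ, (φ l)^2 * (deriv f l)^2 :=
  stmt_3_general f φ hf hfc hφ m ξ hξ0 hξ1 T hT
end

section
/- Let φ : ℝ → ℝ be C² and bounded, 0 ≤ ξ ≤ 1/4, and T(λ) = (1−2ξ)(φ'(λ))² − 2ξ φ(λ) φ''(λ). Suppose T is (Lebesgue) integrable on ℝ. Then ∫_ℝ T(λ) dλ ≥ 0. -/
/-!
Writing `T = φ'² - 2ξ (φ φ')'`, the integral of `T` over `[-R, R]` is at least
`-2ξ u(R)` with `u(R) = φ(R) φ'(R) - φ(-R) φ'(-R)`. Since `u` is the derivative of the bounded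
function `R ↦ (φ(R)² + φ(-R)²) / 2`, it cannot stay above any `ε > 0` for all large `R`,
so along a sequence `R → ∞` these integrals, which tend to `∫ T`, are at least `-2ξε`.
-/

open MeasureTheory Filter Set Topology

theorem frequently_lt_of_hasDerivAt_of_bddAbove {G g : ℝ → ℝ}
    (hG : ∀ x, HasDerivAt G (g x) x) (hbdd : BddAbove (range G)) {ε : ℝ} (hε : 0 < ε) :
    ∃ᶠ x in atTop, g x < ε := by
  rw [frequently_atTop]
  intro N
  by_contra! hge
  have hgrowth : ∀ y ≥ N, ε * (y - N) ≤ G y - G N := fun y hy =>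
    (convex_Ici N).mul_sub_le_image_sub_of_le_deriv
      (fun x _ => (hG x).continuousAt.continuousWithinAt)
      (fun x _ => (hG x).differentiableAt.differentiableWithinAt)
      (fun x hx => (hG x).deriv ▸ hge x (interior_subset hx)) N self_mem_Ici y hy hy
  have hlin : Tendsto (fun y => G N + ε * (y - N)) atTop atTop :=
    tendsto_atTop_add_const_left _ _
      ((tendsto_atTop_add_const_right _ _ tendsto_id).const_mul_atTop hε)
  refine not_bddAbove_of_tendsto_atTop (tendsto_atTop_mono' _ ?_ hlin) hbdd
  filter_upwards [eventually_ge_atTop N] with y hy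
  linarith [hgrowth y hy]

section SecondOrder

variable {φ : ℝ → ℝ}

theorem hasDerivAt_mul_deriv (hφ : ContDiff ℝ 2 φ) (x : ℝ) :
    HasDerivAt (fun y => φ y * deriv φ y) (deriv φ x ^ 2 + φ x * deriv (deriv φ) x) x :=
  ((hφ.differentiable two_ne_zero x).hasDerivAt.mul
    (hφ.differentiable_deriv_two x).hasDerivAt).congr_deriv (by ring)

theorem neg_two_mul_le_intervalIntegral (hφ : ContDiff ℝ 2 φ) (ξ : ℝ) {a b : ℝ} (hab : a ≤ b) :
    -(2 * ξ * (φ b * deriv φ b - φ a * deriv φ a)) ≤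
      ∫ x in a..b, (1 - 2 * ξ) * deriv φ x ^ 2 - 2 * ξ * φ x * deriv (deriv φ) x := by
  have hφ' : Continuous (deriv φ) := hφ.continuous_deriv one_le_two
  have hφ'' : Continuous (deriv (deriv φ)) := (hφ.iterate_deriv' 0 2).continuous
  have hsq : IntervalIntegrable (fun x => deriv φ x ^ 2) volume a b :=
    (hφ'.pow 2).intervalIntegrable a b
  have hprod : IntervalIntegrable (fun x => deriv φ x ^ 2 + φ x * deriv (deriv φ) x) volume a b :=
    ((hφ'.pow 2).add (hφ.continuous.mul hφ'')).intervalIntegrable a b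
  have hftc : ∫ x in a..b, deriv φ x ^ 2 + φ x * deriv (deriv φ) x =
      φ b * deriv φ b - φ a * deriv φ a :=
    intervalIntegral.integral_eq_sub_of_hasDerivAt (fun x _ => hasDerivAt_mul_deriv hφ x) hprod
  have hsq_nonneg : 0 ≤ ∫ x in a..b, deriv φ x ^ 2 :=
    intervalIntegral.integral_nonneg hab fun x _ => sq_nonneg _
  calc -(2 * ξ * (φ b * deriv φ b - φ a * deriv φ a))
      ≤ (∫ x in a..b, deriv φ x ^ 2) -
          2 * ξ * ∫ x in a..b, deriv φ x ^ 2 + φ x * deriv (deriv φ) x := by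
        rw [hftc]; linarith
    _ = ∫ x in a..b, (1 - 2 * ξ) * deriv φ x ^ 2 - 2 * ξ * φ x * deriv (deriv φ) x := by
        rw [← intervalIntegral.integral_const_mul, ← intervalIntegral.integral_sub hsq
          (hprod.const_mul _)]
        congr 1 with x
        ring

theorem hasDerivAt_sq_add_sq_neg (hφ : Differentiable ℝ φ) (R : ℝ) :
    HasDerivAt (fun r => (φ r ^ 2 + φ (-r) ^ 2) / 2)
      (φ R * deriv φ R - φ (-R) * deriv φ (-R)) R := by
  have hneg : HasDerivAt (fun r => φ (-r)) (-deriv φ (-R)) R :=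
    ((hφ (-R)).hasDerivAt.comp R (hasDerivAt_neg' R)).congr_deriv (mul_neg_one _)
  exact ((((hφ R).hasDerivAt.pow 2).add (hneg.pow 2)).div_const 2).congr_deriv
    (by push_cast; ring)

theorem bddAbove_range_sq_add_sq_neg {M : ℝ} (hM : ∀ x, |φ x| ≤ M) :
    BddAbove (range fun r => (φ r ^ 2 + φ (-r) ^ 2) / 2) := by
  refine ⟨M ^ 2, ?_⟩
  rintro _ ⟨r, rfl⟩
  have hsq : ∀ x, φ x ^ 2 ≤ M ^ 2 := fun x => sq_le_sq' (abs_le.mp (hM x)).1 (abs_le.mp (hM x)).2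
  linarith [hsq r, hsq (-r)]

end SecondOrder

theorem stmt_6_general (φ : ℝ → ℝ) (hφ : ContDiff ℝ 2 φ) (hbd : ∃ M, ∀ l, |φ l| ≤ M)
    (ξ : ℝ) (hξ0 : 0 ≤ ξ)
    (T : ℝ → ℝ)
    (hT : ∀ l, T l = (1 - 2*ξ) * (deriv φ l)^2 - 2 * ξ * φ l * deriv (deriv φ) l)
    (hint : Integrable T) :
    (∫ l : ℝ, T l) ≥ 0 := by
  obtain ⟨M, hM⟩ := hbd
  have hT' : T = fun l => (1 - 2 * ξ) * deriv φ l ^ 2 - 2 * ξ * φ l * deriv (deriv φ) l :=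
    funext hT
  have hlim : Tendsto (fun R => ∫ x in -R..R, T x) atTop (𝓝 (∫ l, T l)) :=
    intervalIntegral_tendsto_integral hint tendsto_neg_atTop_atBot tendsto_id
  have hbound : ∀ ε > 0, -(2 * ξ * ε) ≤ ∫ l, T l := by
    intro ε hε
    have hsmall := frequently_lt_of_hasDerivAt_of_bddAbove
      (hasDerivAt_sq_add_sq_neg (hφ.differentiable two_ne_zero))
      (bddAbove_range_sq_add_sq_neg hM) hε
    refine isClosed_Ici.mem_of_frequently_of_tendsto ?_ hlim
    refine (hsmall.and_eventually (eventually_ge_atTop 0)).mono fun R ⟨hR, hR0⟩ => ?_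
    rw [mem_Ici, hT']
    have hlower := neg_two_mul_le_intervalIntegral hφ ξ (neg_le_self hR0)
    nlinarith [mul_le_mul_of_nonneg_left hR.le hξ0]
  have hto0 : Tendsto (fun ε => -(2 * ξ * ε)) (𝓝[>] 0) (𝓝 0) := by
    have hcont : Continuous fun ε : ℝ => -(2 * ξ * ε) := by fun_prop
    simpa using (hcont.tendsto 0).mono_left nhdsWithin_le_nhds
  exact le_of_tendsto hto0 (eventually_nhdsWithin_of_forall hbound)

theorem stmt_6 (φ : ℝ → ℝ) (hφ : ContDiff ℝ 2 φ) (hbd : ∃ M, ∀ l, |φ l| ≤ M)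
    (ξ : ℝ) (hξ0 : 0 ≤ ξ) (hξ1 : ξ ≤ 1/4)
    (T : ℝ → ℝ)
    (hT : ∀ l, T l = (1 - 2*ξ) * (deriv φ l)^2 - 2 * ξ * φ l * deriv (deriv φ) l)
    (hint : Integrable T) :
    (∫ l : ℝ, T l) ≥ 0 :=
  stmt_6_general φ hφ hbd ξ hξ0 T hT hint
end

section
/- Let φ : ℝ → ℝ be C², let 0 ≤ ξ ≤ 1/4, let I be an open interval of length Γ > 0, and set T(λ) = (1−2ξ)(φ')² − 2ξφφ''. Then sup_{λ∈I} T(λ) ≥ −(2ξπ²/Γ²) · (sup_{λ∈I} |φ(λ)|)², assuming φ is bounded on I. -/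
/-!
With `w = 2ξ φ φ' f²` one has `w' = (φ' f + 2ξ φ f')² - 4ξ² φ² f'² - T f²`, so for a test function
`f` vanishing at both ends of `I` integration gives `∫ T f² ≥ -4ξ² (sup |φ|)² ∫ f'²`. For
`f = sin (π (λ - a) / Γ)` we have `∫ f'² = (π / Γ)² ∫ f²`, and `∫ T f² ≤ (sup T) ∫ f²`; hence
`sup T ≥ -(4ξ² π² / Γ²) (sup |φ|)²`, which is at least the claimed bound since `4ξ² ≤ 2ξ`.
-/

open MeasureTheory Real

open Set intervalIntegral

noncomputable def energyDensity (ξ : ℝ) (φ : ℝ → ℝ) (x : ℝ) : ℝ :=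
  (1 - 2 * ξ) * deriv φ x ^ 2 - 2 * ξ * φ x * deriv (deriv φ) x

section HalfPeriod

variable {a b c : ℝ}

lemma integral_sin_sq_half_period (h : c * (b - a) = π) :
    ∫ x in a..b, sin (c * (x - a)) ^ 2 = (b - a) / 2 := by
  have hc : c ≠ 0 := by rintro rfl; simp [pi_ne_zero.symm] at h
  rw [integral_comp_sub_right (fun x ↦ sin (c * x) ^ 2) a,
    integral_comp_mul_left (fun x ↦ sin x ^ 2) hc, integral_sin_sq, sub_self, mul_zero, h]
  simp only [sin_zero, sin_pi, zero_mul, sub_zero, zero_add, smul_eq_mul]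
  rw [← h]
  field_simp

lemma integral_cos_sq_half_period (h : c * (b - a) = π) :
    ∫ x in a..b, cos (c * (x - a)) ^ 2 = (b - a) / 2 := by
  have hc : c ≠ 0 := by rintro rfl; simp [pi_ne_zero.symm] at h
  rw [integral_comp_sub_right (fun x ↦ cos (c * x) ^ 2) a,
    integral_comp_mul_left (fun x ↦ cos x ^ 2) hc, integral_cos_sq, sub_self, mul_zero, h]
  simp only [sin_zero, sin_pi, mul_zero, sub_zero, zero_add, smul_eq_mul]
  rw [← h]
  field_simp

end HalfPeriod

section EnergyDensity

variable {φ : ℝ → ℝ} (ξ : ℝ)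

lemma continuous_energyDensity (hφ : ContDiff ℝ 2 φ) : Continuous (energyDensity ξ φ) := by
  have hφ' := hφ.deriv' (n := 1)
  have := hφ.continuous
  have := hφ'.continuous
  have := hφ'.continuous_deriv le_rfl
  unfold energyDensity
  fun_prop

lemma hasDerivAt_flux (hφ : ContDiff ℝ 2 φ) {f : ℝ → ℝ} {f' x : ℝ} (hf : HasDerivAt f f' x) :
    HasDerivAt (fun y ↦ 2 * ξ * φ y * deriv φ y * f y ^ 2)
      ((deriv φ x * f x + 2 * ξ * φ x * f') ^ 2 - 4 * ξ ^ 2 * φ x ^ 2 * f' ^ 2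
        - energyDensity ξ φ x * f x ^ 2) x := by
  have hφx : HasDerivAt φ (deriv φ x) x := (hφ.differentiable two_ne_zero x).hasDerivAt
  have hφ'x : HasDerivAt (deriv φ) (deriv (deriv φ) x) x :=
    ((hφ.deriv' (n := 1)).differentiable one_ne_zero x).hasDerivAt
  refine (((hφx.const_mul (2 * ξ)).mul hφ'x).mul (hf.pow 2)).congr_deriv ?_
  simp only [energyDensity, Pi.mul_apply, Pi.pow_apply]
  ring

lemma neg_mul_integral_deriv_sq_le_integral_energyDensity_mul_sq (hφ : ContDiff ℝ 2 φ)
    {f f' : ℝ → ℝ} (hf : ∀ x, HasDerivAt f (f' x) x) (hf' : Continuous f')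
    {a b S : ℝ} (hab : a ≤ b) (hfa : f a = 0) (hfb : f b = 0)
    (hS : ∀ x ∈ Ioo a b, |φ x| ≤ S) :
    -(4 * ξ ^ 2 * S ^ 2) * ∫ x in a..b, f' x ^ 2 ≤ ∫ x in a..b, energyDensity ξ φ x * f x ^ 2 := by
  have hfc : Continuous f := continuous_iff_continuousAt.mpr fun x ↦ (hf x).continuousAt
  have hTc := continuous_energyDensity ξ hφ
  have hφc := hφ.continuous
  have hφ'c := (hφ.deriv' (n := 1)).continuous
  have hflux : ∫ x in a..b, ((deriv φ x * f x + 2 * ξ * φ x * f' x) ^ 2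
      - 4 * ξ ^ 2 * φ x ^ 2 * f' x ^ 2 - energyDensity ξ φ x * f x ^ 2) = 0 := by
    rw [integral_eq_sub_of_hasDerivAt (fun x _ ↦ hasDerivAt_flux ξ hφ (hf x))
      (Continuous.intervalIntegrable (by fun_prop) a b)]
    simp [hfa, hfb]
  have hmono : ∫ x in a..b, (-(4 * ξ ^ 2 * S ^ 2) * f' x ^ 2 - energyDensity ξ φ x * f x ^ 2)
      ≤ 0 := by
    refine hflux ▸ integral_mono_on_of_le_Ioo hab (Continuous.intervalIntegrable (by fun_prop) a b)
      (Continuous.intervalIntegrable (by fun_prop) a b) fun x hx ↦ ?_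
    have hφS : φ x ^ 2 ≤ S ^ 2 := sq_le_sq' (abs_le.mp (hS x hx)).1 (abs_le.mp (hS x hx)).2
    nlinarith [sq_nonneg (deriv φ x * f x + 2 * ξ * φ x * f' x),
      mul_le_mul_of_nonneg_left hφS (by positivity : 0 ≤ 4 * ξ ^ 2 * f' x ^ 2)]
  rw [integral_sub (Continuous.intervalIntegrable (by fun_prop) a b)
    (Continuous.intervalIntegrable (by fun_prop) a b),
    intervalIntegral.integral_const_mul] at hmono
  linarith

lemma neg_mul_sq_le_of_energyDensity_le (hφ : ContDiff ℝ 2 φ) {a b S M : ℝ} (hab : a < b)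
    (hS : ∀ x ∈ Ioo a b, |φ x| ≤ S) (hM : ∀ x ∈ Ioo a b, energyDensity ξ φ x ≤ M) :
    -(4 * ξ ^ 2 * π ^ 2 / (b - a) ^ 2) * S ^ 2 ≤ M := by
  set c := π / (b - a)
  have hc : c * (b - a) = π := div_mul_cancel₀ _ (sub_pos.2 hab).ne'
  have hf : ∀ x, HasDerivAt (fun y ↦ sin (c * (y - a))) (c * cos (c * (x - a))) x := fun x ↦
    (((hasDerivAt_id x).sub_const a).const_mul c).sin.congr_deriv (by simp [mul_comm])
  have hlower := neg_mul_integral_deriv_sq_le_integral_energyDensity_mul_sq ξ hφ hf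
    (by fun_prop) hab.le (by simp) (by simp [hc]) hS
  have hupper : ∫ x in a..b, energyDensity ξ φ x * sin (c * (x - a)) ^ 2
      ≤ ∫ x in a..b, M * sin (c * (x - a)) ^ 2 :=
    integral_mono_on_of_le_Ioo hab.le
      (Continuous.intervalIntegrable (by have := continuous_energyDensity ξ hφ; fun_prop) a b)
      (Continuous.intervalIntegrable (by fun_prop) a b)
      fun x hx ↦ mul_le_mul_of_nonneg_right (hM x hx) (sq_nonneg _)
  simp only [mul_pow, intervalIntegral.integral_const_mul, integral_cos_sq_half_period hc,
    integral_sin_sq_half_period hc] at hlower hupper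
  calc -(4 * ξ ^ 2 * π ^ 2 / (b - a) ^ 2) * S ^ 2 = -(4 * ξ ^ 2 * S ^ 2) * c ^ 2 := by
        rw [div_pow]; ring
    _ ≤ M := by nlinarith

end EnergyDensity

theorem stmt_9_general (φ : ℝ → ℝ) (hφ : ContDiff ℝ 2 φ) (ξ : ℝ) (hξ0 : 0 ≤ ξ) (hξ1 : ξ ≤ 1/4)
    (a b : ℝ) (Γ : ℝ) (hΓ : Γ = b - a)
    (T : ℝ → ℝ)
    (hT : ∀ l, T l = (1 - 2*ξ) * (deriv φ l)^2 - 2 * ξ * φ l * deriv (deriv φ) l) :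
    sSup (T '' Set.Ioo a b)
      ≥ -(2 * ξ * π^2 / Γ^2) * (sSup ((fun l => |φ l|) '' Set.Ioo a b))^2 := by
  obtain hba | hab := le_or_gt b a
  -- `I = ∅`, and `sSup ∅ = 0` makes both sides vanish.
  · simp [Ioo_eq_empty_of_le hba]
  obtain rfl : T = energyDensity ξ φ := funext hT
  have hbdd {g : ℝ → ℝ} (hg : Continuous g) : BddAbove (g '' Ioo a b) :=
    (isCompact_Icc.bddAbove_image hg.continuousOn).mono (image_mono Ioo_subset_Icc_self)
  have hS x (hx : x ∈ Ioo a b) := le_csSup (hbdd hφ.continuous.abs) (mem_image_of_mem _ hx)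
  have hM x (hx : x ∈ Ioo a b) :=
    le_csSup (hbdd (continuous_energyDensity ξ hφ)) (mem_image_of_mem _ hx)
  refine le_trans ?_ (hΓ ▸ neg_mul_sq_le_of_energyDensity_le ξ hφ hab hS hM)
  have hξ : 4 * ξ ^ 2 ≤ 2 * ξ := by nlinarith
  gcongr

theorem stmt_9 (φ : ℝ → ℝ) (hφ : ContDiff ℝ 2 φ) (ξ : ℝ) (hξ0 : 0 ≤ ξ) (hξ1 : ξ ≤ 1/4)
    (a b : ℝ) (Γ : ℝ) (hΓ : Γ = b - a) (hΓpos : 0 < Γ)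
    (hbd : ∃ M, ∀ l ∈ Set.Ioo a b, |φ l| ≤ M)
    (T : ℝ → ℝ)
    (hT : ∀ l, T l = (1 - 2*ξ) * (deriv φ l)^2 - 2 * ξ * φ l * deriv (deriv φ) l) :
    sSup (T '' Set.Ioo a b)
      ≥ -(2 * ξ * π^2 / Γ^2) * (sSup ((fun l => |φ l|) '' Set.Ioo a b))^2 :=
  stmt_9_general φ hφ ξ hξ0 hξ1 a b Γ hΓ T hT
end

section
/- Let α > 0, β ∈ ℝ, T > 0, k > 0. The eigenvalue problem −f''(x) + (−α δ(x) + β δ(x−T)) f(x) = −k² f(x) — interpreted as: f is continuous, square-integrable, satisfies f'' = k² f on ℝ \ {0, T}, with jump conditions f'(0⁺) − f'(0⁻) = −α f(0) and f'(T⁺) − f'(T⁻) = β f(T) — has no nonzero square-integrable solution for any k > 0 if and only if αT < 1 and αT ≤ βT(1 − αT). -/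
/-!
On each of the three intervals cut out by the delta sites a solution of `f'' = k² f` is a
combination of `e^{kx}` and `e^{-kx}`, and square integrability kills the growing exponential on
each half-line. Continuity and the two jump conditions then form a linear system in the four
remaining coefficients, which has a nontrivial solution iff `φ (2k) = 0`, where
`φ u = (u - α)(u + β) + αβ e^{-uT}`.

If `αT < 1` and `αT ≤ βT(1 - αT)`, then `β > 0` and `e^{-uT} > 1 - uT` give
`φ u > u² + (β - α - αβT) u ≥ 0` for `u > 0`. Otherwise `φ` is nonpositive somewhere on
`(0, ∞)` (at `u = α` if `β ≤ 0`; just right of `0` if `β > 0`, since `φ 0 = 0` and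
`φ' 0 = β - α - αβT < 0`) and nonnegative for large `u`, so it has a positive zero.
-/

open MeasureTheory Filter Set Real Topology

noncomputable def expPair (a b k x : ℝ) : ℝ := a * exp (k * x) + b * exp (-(k * x))

def SolvesAt (k : ℝ) (f : ℝ → ℝ) (x : ℝ) : Prop :=
  DifferentiableAt ℝ f x ∧ DifferentiableAt ℝ (deriv f) x ∧ deriv (deriv f) x = k ^ 2 * f x

section ExpPair

variable {a b k : ℝ}

theorem hasDerivAt_expPair (x : ℝ) :
    HasDerivAt (expPair a b k) (expPair (a * k) (-(b * k)) k x) x := by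
  have hlin := (hasDerivAt_id x).const_mul k
  refine ((hlin.exp.const_mul a).add (hlin.neg.exp.const_mul b)).congr_deriv ?_
  simp only [expPair, id, Pi.neg_apply]
  ring

theorem deriv_expPair : deriv (expPair a b k) = expPair (a * k) (-(b * k)) k :=
  funext fun x => (hasDerivAt_expPair x).deriv

theorem continuous_expPair : Continuous (expPair a b k) := by
  unfold expPair
  fun_prop

theorem expPair_neg (x : ℝ) : expPair a b k (-x) = expPair b a k x := by
  simp only [expPair, mul_neg, neg_neg]
  ring

variable {f : ℝ → ℝ} {s : Set ℝ}

theorem eqOn_deriv_of_eqOn_expPair (hs : IsOpen s) (hf : EqOn f (expPair a b k) s) :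
    EqOn (deriv f) (expPair (a * k) (-(b * k)) k) s := fun x hx =>
  ((hf.eventuallyEq_of_mem (hs.mem_nhds hx)).deriv_eq).trans (hasDerivAt_expPair x).deriv

theorem solvesAt_of_eqOn_expPair (hs : IsOpen s) (hf : EqOn f (expPair a b k) s) {x : ℝ}
    (hx : x ∈ s) : SolvesAt k f x := by
  have hf_nhds := hf.eventuallyEq_of_mem (hs.mem_nhds hx)
  have hf'_nhds := (eqOn_deriv_of_eqOn_expPair hs hf).eventuallyEq_of_mem (hs.mem_nhds hx)
  refine ⟨hf_nhds.differentiableAt_iff.2 (hasDerivAt_expPair x).differentiableAt,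
    hf'_nhds.differentiableAt_iff.2 (hasDerivAt_expPair x).differentiableAt, ?_⟩
  rw [hf'_nhds.deriv_eq, (hasDerivAt_expPair x).deriv, hf hx]
  simp only [expPair]
  ring

theorem tendsto_deriv_of_eqOn_expPair (hs : IsOpen s) (hf : EqOn f (expPair a b k) s)
    {t : Set ℝ} {c : ℝ} (hst : s ∈ 𝓝[t] c) :
    Tendsto (deriv f) (𝓝[t] c) (𝓝 (expPair (a * k) (-(b * k)) k c)) :=
  (continuous_expPair.continuousWithinAt (s := t) (x := c)).tendsto.congr'
    ((eqOn_deriv_of_eqOn_expPair hs hf).eventuallyEq_of_mem hst).symm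

end ExpPair

section ODE

variable {f : ℝ → ℝ} {s : Set ℝ} {k : ℝ}

theorem exists_forall_deriv_add_mul_mul_exp_eq (hs : IsOpen s) (hs' : IsPreconnected s)
    (hf : ∀ x ∈ s, SolvesAt k f x) {c : ℝ} (hc : c ^ 2 = k ^ 2) :
    ∃ C, ∀ x ∈ s, (deriv f x + c * f x) * exp (-(c * x)) = C := by
  have hderiv : ∀ x ∈ s,
      HasDerivAt (fun x => (deriv f x + c * f x) * exp (-(c * x))) 0 x := by
    intro x hx
    obtain ⟨hf₁, hf₂, hf₃⟩ := hf x hx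
    refine ((hf₂.hasDerivAt.add (hf₁.hasDerivAt.const_mul c)).mul
      ((hasDerivAt_id x).const_mul c).neg.exp).congr_deriv ?_
    simp only [Pi.add_apply, Pi.neg_apply, id, hf₃, ← hc]
    ring
  exact hs.exists_is_const_of_deriv_eq_zero hs'
    (fun x hx => (hderiv x hx).differentiableAt.differentiableWithinAt)
    (fun x hx => (hderiv x hx).deriv)

theorem exists_eqOn_expPair (hk : k ≠ 0) (hs : IsOpen s) (hs' : IsPreconnected s)
    (hf : ∀ x ∈ s, SolvesAt k f x) : ∃ a b, EqOn f (expPair a b k) s := by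
  obtain ⟨C₁, hC₁⟩ := exists_forall_deriv_add_mul_mul_exp_eq hs hs' hf (c := k) rfl
  obtain ⟨C₂, hC₂⟩ := exists_forall_deriv_add_mul_mul_exp_eq hs hs' hf (neg_sq k)
  refine ⟨C₁ / (2 * k), -C₂ / (2 * k), fun x hx => ?_⟩
  have h₁ := hC₁ x hx
  have h₂ := hC₂ x hx
  have hexp : exp (k * x) * exp (-(k * x)) = 1 := by rw [← exp_add, add_neg_cancel, exp_zero]
  simp only [neg_mul, neg_neg] at h₂
  simp only [expPair]
  field_simp
  linear_combination exp (k * x) * h₁ - exp (-(k * x)) * h₂ - 2 * k * f x * hexp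

end ODE

section Integrability

theorem not_integrableOn_Ioi_of_eventually_ge {g : ℝ → ℝ} {ε : ℝ} (hε : 0 < ε)
    (hg : ∀ᶠ x in atTop, ε ≤ g x) (c : ℝ) : ¬ IntegrableOn g (Ioi c) := by
  intro hint
  obtain ⟨M, hM⟩ := eventually_atTop.1 hg
  have hconst : IntegrableOn (fun _ => ε) (Ioi (max c M)) := by
    refine Integrable.mono' (hint.mono_set (Ioi_subset_Ioi (le_max_left c M)))
      aestronglyMeasurable_const ((ae_restrict_iff' measurableSet_Ioi).2 ?_)
    filter_upwards with x hx
    rw [Real.norm_of_nonneg hε.le]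
    exact hM x (le_max_right c M |>.trans (le_of_lt hx))
  simp [integrableOn_const_iff, hε.ne'] at hconst

variable {a b k : ℝ}

theorem eventually_sq_le_sq_expPair (hk : 0 < k) (ha : a ≠ 0) :
    ∀ᶠ x in atTop, (a / 2) ^ 2 ≤ expPair a b k x ^ 2 := by
  have hdecay : Tendsto (fun x => |b| * exp (-(k * x))) atTop (𝓝 (|b| * 0)) :=
    (tendsto_exp_atBot.comp
      (tendsto_neg_atTop_atBot.comp (tendsto_id.const_mul_atTop hk))).const_mul |b|
  have hsmall := hdecay.eventually_lt_const (by rw [mul_zero]; positivity : |b| * 0 < |a| / 2)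
  filter_upwards [hsmall, eventually_ge_atTop 0] with x hsmall hx
  have hgrow : 1 ≤ exp (k * x) := one_le_exp (by positivity)
  rw [sq_le_sq, abs_div, abs_two]
  calc |a| / 2 ≤ |a| * exp (k * x) - |b| * exp (-(k * x)) := by nlinarith [abs_nonneg a]
    _ = |a * exp (k * x)| - |b * exp (-(k * x))| := by
        rw [abs_mul, abs_mul, abs_of_pos (exp_pos _), abs_of_pos (exp_pos _)]
    _ ≤ |expPair a b k x| := abs_sub_abs_le_abs_add _ _

theorem not_integrableOn_Ioi_sq_expPair (hk : 0 < k) (ha : a ≠ 0) (c : ℝ) :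
    ¬ IntegrableOn (fun x => expPair a b k x ^ 2) (Ioi c) :=
  not_integrableOn_Ioi_of_eventually_ge (by positivity) (eventually_sq_le_sq_expPair hk ha) c

theorem not_integrableOn_Iio_sq_expPair (hk : 0 < k) (hb : b ≠ 0) (c : ℝ) :
    ¬ IntegrableOn (fun x => expPair a b k x ^ 2) (Iio c) := by
  intro hint
  rw [← neg_neg c] at hint
  have hreflect := hint.comp_neg_Ioi
  simp only [expPair_neg] at hreflect
  exact not_integrableOn_Ioi_sq_expPair hk hb (-c) hreflect

theorem integrableOn_Ioi_sq_expPair_zero_left (hk : 0 < k) (c : ℝ) :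
    IntegrableOn (fun x => expPair 0 b k x ^ 2) (Ioi c) := by
  have hexp : IntegrableOn (fun x => b ^ 2 * exp (-(2 * k) * x)) (Ioi c) :=
    (integrableOn_exp_mul_Ioi (by linarith) c).const_mul _
  refine hexp.congr_fun (fun x _ => ?_) measurableSet_Ioi
  simp only [expPair, zero_mul, zero_add, mul_pow, ← exp_nat_mul]
  ring_nf

theorem integrableOn_Iio_sq_expPair_zero_right (hk : 0 < k) (c : ℝ) :
    IntegrableOn (fun x => expPair a 0 k x ^ 2) (Iio c) := by
  have hexp : IntegrableOn (fun x => a ^ 2 * exp (2 * k * x)) (Iic c) :=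
    (integrableOn_exp_mul_Iic (by linarith) c).const_mul _
  refine (hexp.mono_set Iio_subset_Iic_self).congr_fun (fun x _ => ?_) measurableSet_Iio
  simp only [expPair, zero_mul, add_zero, mul_pow, ← exp_nat_mul]
  ring_nf

variable {f : ℝ → ℝ}

theorem exists_eqOn_expPair_Iio (hk : 0 < k) {c : ℝ} (hf : ∀ x < c, SolvesAt k f x)
    (hint : IntegrableOn (fun x => f x ^ 2) (Iio c)) : ∃ a, EqOn f (expPair a 0 k) (Iio c) := by
  obtain ⟨a, b, hab⟩ := exists_eqOn_expPair hk.ne' isOpen_Iio isPreconnected_Iio hf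
  obtain rfl : b = 0 := by
    by_contra hb
    exact not_integrableOn_Iio_sq_expPair (a := a) hk hb c
      (hint.congr_fun (fun x hx => congrArg (· ^ 2) (hab hx)) measurableSet_Iio)
  exact ⟨a, hab⟩

theorem exists_eqOn_expPair_Ioi (hk : 0 < k) {c : ℝ} (hf : ∀ x > c, SolvesAt k f x)
    (hint : IntegrableOn (fun x => f x ^ 2) (Ioi c)) : ∃ b, EqOn f (expPair 0 b k) (Ioi c) := by
  obtain ⟨a, b, hab⟩ := exists_eqOn_expPair hk.ne' isOpen_Ioi isPreconnected_Ioi hf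
  obtain rfl : a = 0 := by
    by_contra ha
    exact not_integrableOn_Ioi_sq_expPair (b := b) hk ha c
      (hint.congr_fun (fun x hx => congrArg (· ^ 2) (hab hx)) measurableSet_Ioi)
  exact ⟨b, hab⟩

theorem integrable_sq_of_eqOn_expPair (hk : 0 < k) (hf : Continuous f) {c c' : ℝ}
    (hleft : EqOn f (expPair a 0 k) (Iio c)) (hright : EqOn f (expPair 0 b k) (Ioi c')) :
    Integrable (fun x => f x ^ 2) := by
  have hcover : univ ⊆ Iio c ∪ (Icc c c' ∪ Ioi c') := fun x _ => by
    by_cases hxc : x < c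
    · exact Or.inl hxc
    by_cases hxc' : c' < x
    · exact Or.inr (Or.inr hxc')
    exact Or.inr (Or.inl ⟨not_lt.1 hxc, not_lt.1 hxc'⟩)
  rw [← integrableOn_univ]
  refine IntegrableOn.mono_set ?_ hcover
  refine IntegrableOn.union ?_ (IntegrableOn.union ((hf.pow 2).integrableOn_Icc) ?_)
  · exact (integrableOn_Iio_sq_expPair_zero_right hk c).congr_fun
      (fun x hx => by rw [hleft hx]) measurableSet_Iio
  · exact (integrableOn_Ioi_sq_expPair_zero_left hk c').congr_fun
      (fun x hx => by rw [hright hx]) measurableSet_Ioi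

end Integrability

section Secular

/-- Determinant of the matching conditions at `0` and `T`, as a function of `u = 2k`. -/
noncomputable def secular (α β T u : ℝ) : ℝ := (u - α) * (u + β) + α * β * exp (-(u * T))

variable {α β T : ℝ}

theorem continuous_secular : Continuous (secular α β T) := by
  unfold secular
  fun_prop

theorem secular_pos (hα : 0 < α) (hT : 0 < T) (h₁ : α * T < 1)
    (h₂ : α * T ≤ β * T * (1 - α * T)) {u : ℝ} (hu : 0 < u) : 0 < secular α β T u := by
  have hβ : 0 < β := by
    by_contra! hβ
    nlinarith [mul_pos hα hT,
      mul_nonneg (neg_nonneg.2 hβ) (mul_nonneg hT.le (sub_nonneg.2 h₁.le))]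
  have hslope : 0 ≤ β - α - α * β * T := by nlinarith
  have hexp : 1 - u * T < exp (-(u * T)) := by
    linarith [add_one_lt_exp (neg_ne_zero.2 (by positivity) : -(u * T) ≠ 0)]
  unfold secular
  nlinarith [mul_pos hα hβ]

theorem secular_nonneg (hα : 0 ≤ α) (hT : 0 ≤ T) {u : ℝ} (hu : α + |β| ≤ u) :
    0 ≤ secular α β T u := by
  have hexp : exp (-(u * T)) ≤ 1 := exp_le_one_iff.2 (by nlinarith [abs_nonneg β])
  unfold secular
  rcases le_total 0 β with hβ | hβ
  · rw [abs_of_nonneg hβ] at hu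
    nlinarith [mul_nonneg (mul_nonneg hα hβ) (exp_pos (-(u * T))).le]
  · rw [abs_of_nonpos hβ] at hu
    nlinarith [mul_nonneg hα (neg_nonneg.2 hβ)]

theorem exists_secular_eq_zero_of_nonpos (hα : 0 ≤ α) (hT : 0 ≤ T) {u : ℝ} (hu : 0 < u)
    (hneg : secular α β T u ≤ 0) : ∃ w, 0 < w ∧ secular α β T w = 0 := by
  have hle : u ≤ u + (α + |β|) := by linarith [abs_nonneg β]
  obtain ⟨w, hw, hzero⟩ := intermediate_value_Icc hle continuous_secular.continuousOn
    ⟨hneg, secular_nonneg hα hT (le_add_of_nonneg_left hu.le)⟩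
  exact ⟨w, hu.trans_le hw.1, hzero⟩

theorem hasDerivAt_secular_zero :
    HasDerivAt (secular α β T) (β - α - α * β * T) 0 := by
  have hid := hasDerivAt_id (0 : ℝ)
  have hquad := (hid.sub_const α).mul (hid.add_const β)
  have hexp := ((hid.mul_const T).neg.exp).const_mul (α * β)
  refine (hquad.add hexp).congr_deriv ?_
  simp only [id, Pi.neg_apply, zero_mul, neg_zero, exp_zero]
  ring

theorem exists_secular_eq_zero (hα : 0 < α) (hT : 0 < T)
    (h : ¬(α * T < 1 ∧ α * T ≤ β * T * (1 - α * T))) :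
    ∃ u, 0 < u ∧ secular α β T u = 0 := by
  rcases le_or_gt β 0 with hβ | hβ
  · refine exists_secular_eq_zero_of_nonpos hα.le hT.le hα ?_
    simp only [secular, sub_self, zero_mul, zero_add]
    exact mul_nonpos_of_nonpos_of_nonneg (mul_nonpos_of_nonneg_of_nonpos hα.le hβ) (exp_pos _).le
  · -- `secular` vanishes at `0` with negative slope, so it is negative just right of `0`.
    have hslope : β - α - α * β * T < 0 := by
      by_contra! hslope
      exact h ⟨by nlinarith [mul_pos hα hβ], by nlinarith⟩
    have hzero : secular α β T 0 = 0 := by simp [secular]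
    have hneg := hasDerivAt_secular_zero.tendsto_slope_zero_right.eventually_lt_const hslope
    obtain ⟨u, hu_slope, hu⟩ := (hneg.and self_mem_nhdsWithin).exists
    refine exists_secular_eq_zero_of_nonpos hα.le hT.le (u := u) hu ?_
    simp only [zero_add, hzero, sub_zero, smul_eq_mul] at hu_slope
    exact (neg_of_mul_neg_right hu_slope (inv_nonneg.2 hu.le)).le

theorem forall_secular_ne_zero_iff (hα : 0 < α) (hT : 0 < T) :
    (∀ u, 0 < u → secular α β T u ≠ 0) ↔
      α * T < 1 ∧ α * T ≤ β * T * (1 - α * T) := by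
  refine ⟨fun h => ?_, fun ⟨h₁, h₂⟩ u hu => (secular_pos hα hT h₁ h₂ hu).ne'⟩
  by_contra hcond
  obtain ⟨u, hu, hzero⟩ := exists_secular_eq_zero hα hT hcond
  exact h u hu hzero

end Secular

section BoundState

variable {f : ℝ → ℝ} {k : ℝ}

def IsBoundState (α β T k : ℝ) (f : ℝ → ℝ) : Prop :=
  f ≠ 0 ∧ Continuous f ∧ Integrable (fun x => (f x)^2) ∧
    (∀ x : ℝ, x ≠ 0 → x ≠ T → SolvesAt k f x) ∧
    ∃ L0m L0p LTm LTp : ℝ,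
      Tendsto (deriv f) (𝓝[<] 0) (𝓝 L0m) ∧ Tendsto (deriv f) (𝓝[>] 0) (𝓝 L0p) ∧
      Tendsto (deriv f) (𝓝[<] T) (𝓝 LTm) ∧ Tendsto (deriv f) (𝓝[>] T) (𝓝 LTp) ∧
      L0p - L0m = -α * f 0 ∧ LTp - LTm = β * f T

variable {α β T : ℝ}

theorem exists_eqOn_expPair_of_isBoundState (hT : 0 < T) (hk : 0 < k)
    (hf : IsBoundState α β T k f) :
    ∃ A B C D, EqOn f (expPair A 0 k) (Iio 0) ∧ EqOn f (expPair B C k) (Ioo 0 T) ∧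
      EqOn f (expPair 0 D k) (Ioi T) := by
  obtain ⟨-, -, hint, hsol, -⟩ := hf
  obtain ⟨A, hA⟩ := exists_eqOn_expPair_Iio hk
    (fun x hx => hsol x hx.ne (hx.trans hT).ne) hint.integrableOn
  obtain ⟨B, C, hBC⟩ := exists_eqOn_expPair hk.ne' isOpen_Ioo isPreconnected_Ioo
    (fun x hx => hsol x hx.1.ne' hx.2.ne)
  obtain ⟨D, hD⟩ := exists_eqOn_expPair_Ioi hk
    (fun x hx => hsol x (hT.trans hx).ne' hx.ne') hint.integrableOn
  exact ⟨A, B, C, D, hA, hBC, hD⟩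

theorem secular_eq_zero_of_matching {k A B C : ℝ} (hA : A ≠ 0)
    (hB : 2 * k * B = (2 * k - α) * A) (hC : 2 * k * C = α * A)
    (hjump : (2 * k + β) * B * exp (k * T) + β * C * exp (-(k * T)) = 0) :
    secular α β T (2 * k) = 0 := by
  have he : exp (k * T) * exp (-(k * T)) = 1 := by rw [← exp_add, add_neg_cancel, exp_zero]
  have he' : exp (-(2 * k * T)) = exp (-(k * T)) * exp (-(k * T)) := by rw [← exp_add]; ring_nf
  refine mul_left_cancel₀ hA ?_
  rw [secular, he', mul_zero]
  linear_combination exp (-(k * T)) * (2 * k * hjump - (2 * k + β) * exp (k * T) * hB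
    - β * exp (-(k * T)) * hC) - A * (2 * k + β) * (2 * k - α) * he

theorem secular_eq_zero_of_isBoundState (hT : 0 < T) (hk : 0 < k)
    (hf : IsBoundState α β T k f) : secular α β T (2 * k) = 0 := by
  obtain ⟨A, B, C, D, hA, hBC, hD⟩ := exists_eqOn_expPair_of_isBoundState hT hk hf
  obtain ⟨hf0, hcont, -, -, L0m, L0p, LTm, LTp, h0m, h0p, hTm, hTp, hjump0, hjumpT⟩ := hf
  have hA' : EqOn f (expPair A 0 k) (Iic 0) := by
    simpa only [closure_Iio] using hA.closure hcont continuous_expPair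
  have hBC' : EqOn f (expPair B C k) (Icc 0 T) := by
    simpa only [closure_Ioo hT.ne] using hBC.closure hcont continuous_expPair
  have hD' : EqOn f (expPair 0 D k) (Ici T) := by
    simpa only [closure_Ioi] using hD.closure hcont continuous_expPair
  have hcont0 : A = B + C := by
    simpa [expPair] using (hA' self_mem_Iic).symm.trans (hBC' (left_mem_Icc.2 hT.le))
  have hcontT : B * exp (k * T) + C * exp (-(k * T)) = D * exp (-(k * T)) := by
    simpa [expPair] using (hBC' (right_mem_Icc.2 hT.le)).symm.trans (hD' self_mem_Ici)
  rw [tendsto_nhds_unique h0m (tendsto_deriv_of_eqOn_expPair isOpen_Iio hA self_mem_nhdsWithin),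
    tendsto_nhds_unique h0p (tendsto_deriv_of_eqOn_expPair isOpen_Ioo hBC (Ioo_mem_nhdsGT hT)),
    hA' self_mem_Iic] at hjump0
  rw [tendsto_nhds_unique hTm (tendsto_deriv_of_eqOn_expPair isOpen_Ioo hBC (Ioo_mem_nhdsLT hT)),
    tendsto_nhds_unique hTp (tendsto_deriv_of_eqOn_expPair isOpen_Ioi hD self_mem_nhdsWithin),
    hBC' (right_mem_Icc.2 hT.le)] at hjumpT
  simp only [expPair, mul_zero, neg_zero, exp_zero, zero_mul, mul_one, add_zero, zero_add]
    at hjump0 hjumpT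
  have hB : 2 * k * B = (2 * k - α) * A := by linear_combination hjump0 - k * hcont0
  have hC : 2 * k * C = α * A := by linear_combination -hjump0 - k * hcont0
  refine secular_eq_zero_of_matching (fun hA0 => hf0 (funext fun x => ?_)) hB hC
    (by linear_combination -hjumpT + k * hcontT)
  subst hA0
  obtain rfl : B = 0 := by simpa [hk.ne'] using hB
  obtain rfl : C = 0 := by simpa [hk.ne'] using hC
  obtain rfl : D = 0 := by simpa [(exp_pos _).ne'] using hcontT.symm
  rcases le_or_gt x 0 with hx | hx
  · simpa [expPair] using hA' hx
  rcases le_or_gt x T with hx' | hx'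
  · simpa [expPair] using hBC' ⟨hx.le, hx'⟩
  · simpa [expPair] using hD' hx'.le

/-- The solution normalised by `f 0 = 2k`: its coefficients are forced by continuity and by the
jump condition at `0`; the jump condition at `T` then reads `secular α β T (2 * k) = 0`. -/
noncomputable def boundState (α T k x : ℝ) : ℝ :=
  if x ≤ 0 then expPair (2 * k) 0 k x
  else if x ≤ T then expPair (2 * k - α) α k x
  else expPair 0 ((2 * k - α) * (exp (k * T) * exp (k * T)) + α) k x

theorem eqOn_boundState_Iio : EqOn (boundState α T k) (expPair (2 * k) 0 k) (Iio 0) :=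
  fun _ hx => if_pos (le_of_lt hx)

theorem eqOn_boundState_Ioo :
    EqOn (boundState α T k) (expPair (2 * k - α) α k) (Ioo 0 T) := fun _ hx => by
  simp only [boundState, if_neg (not_le.2 hx.1), if_pos hx.2.le]

theorem eqOn_boundState_Ioi (hT : 0 ≤ T) :
    EqOn (boundState α T k) (expPair 0 ((2 * k - α) * (exp (k * T) * exp (k * T)) + α) k)
      (Ioi T) := fun _ hx => by
  simp only [boundState, if_neg (not_le.2 (hT.trans_lt hx)), if_neg (not_le.2 (mem_Ioi.1 hx))]

theorem continuous_boundState (hT : 0 ≤ T) : Continuous (boundState α T k) := by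
  have he : exp (k * T) * exp (-(k * T)) = 1 := by rw [← exp_add, add_neg_cancel, exp_zero]
  refine continuous_expPair.if_le
    (continuous_expPair.if_le continuous_expPair continuous_id continuous_const ?_)
    continuous_id continuous_const ?_
  · rintro x rfl
    simp only [expPair]
    linear_combination (-((2 * k - α) * exp (k * x))) * he
  · rintro x rfl
    simp [expPair, hT]

theorem isBoundState_boundState (hT : 0 < T) (hk : 0 < k) (h : secular α β T (2 * k) = 0) :
    IsBoundState α β T k (boundState α T k) := by
  have he : exp (k * T) * exp (-(k * T)) = 1 := by rw [← exp_add, add_neg_cancel, exp_zero]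
  have he' : exp (-(2 * k * T)) = exp (-(k * T)) * exp (-(k * T)) := by rw [← exp_add]; ring_nf
  have hf0 : boundState α T k 0 = 2 * k := by simp [boundState, expPair]
  have hfT : boundState α T k T = expPair (2 * k - α) α k T := by simp [boundState, hT.not_ge]
  refine ⟨fun hzero => ?_, continuous_boundState hT.le,
    integrable_sq_of_eqOn_expPair hk (continuous_boundState hT.le) eqOn_boundState_Iio
      (eqOn_boundState_Ioi hT.le), ?_, _, _, _, _,
    tendsto_deriv_of_eqOn_expPair isOpen_Iio eqOn_boundState_Iio self_mem_nhdsWithin,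
    tendsto_deriv_of_eqOn_expPair isOpen_Ioo eqOn_boundState_Ioo (Ioo_mem_nhdsGT hT),
    tendsto_deriv_of_eqOn_expPair isOpen_Ioo eqOn_boundState_Ioo (Ioo_mem_nhdsLT hT),
    tendsto_deriv_of_eqOn_expPair isOpen_Ioi (eqOn_boundState_Ioi hT.le) self_mem_nhdsWithin,
    ?_, ?_⟩
  · have h0 := congrFun hzero 0
    rw [hf0, Pi.zero_apply] at h0
    linarith
  · intro x hx0 hxT
    rcases hx0.lt_or_gt with hx | hx
    · exact solvesAt_of_eqOn_expPair isOpen_Iio eqOn_boundState_Iio hx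
    rcases hxT.lt_or_gt with hx' | hx'
    · exact solvesAt_of_eqOn_expPair isOpen_Ioo eqOn_boundState_Ioo ⟨hx, hx'⟩
    · exact solvesAt_of_eqOn_expPair isOpen_Ioi (eqOn_boundState_Ioi hT.le) hx'
  · rw [hf0]
    simp only [expPair, mul_zero, neg_zero, exp_zero, mul_one]
    ring
  · rw [hfT]
    rw [secular, he'] at h
    simp only [expPair]
    linear_combination (-(k * (2 * k - α) * exp (k * T))) * he - exp (k * T) * h
      + α * β * exp (-(k * T)) * he

end BoundState

theorem stmt_10 (α β T : ℝ) (hα : 0 < α) (hT : 0 < T) :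
    (∀ k : ℝ, 0 < k →
      ¬ ∃ f : ℝ → ℝ, f ≠ 0 ∧ Continuous f ∧
        Integrable (fun x => (f x)^2) ∧
        (∀ x : ℝ, x ≠ 0 → x ≠ T →
          DifferentiableAt ℝ f x ∧ DifferentiableAt ℝ (deriv f) x ∧
          deriv (deriv f) x = k^2 * f x) ∧
        ∃ L0m L0p LTm LTp : ℝ,
          Tendsto (deriv f) (nhdsWithin 0 (Set.Iio 0)) (nhds L0m) ∧
          Tendsto (deriv f) (nhdsWithin 0 (Set.Ioi 0)) (nhds L0p) ∧
          Tendsto (deriv f) (nhdsWithin T (Set.Iio T)) (nhds LTm) ∧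
          Tendsto (deriv f) (nhdsWithin T (Set.Ioi T)) (nhds LTp) ∧
          L0p - L0m = -α * f 0 ∧ LTp - LTm = β * f T)
    ↔ (α * T < 1 ∧ α * T ≤ β * T * (1 - α * T)) := by
  rw [← forall_secular_ne_zero_iff hα hT]
  constructor
  · intro hnone u hu hzero
    refine hnone (u / 2) (by positivity) ⟨boundState α T (u / 2), isBoundState_boundState hT
      (by positivity) ?_⟩
    rwa [mul_div_cancel₀ u two_ne_zero]
  · rintro hne k hk ⟨f, hf⟩
    exact hne (2 * k) (by positivity) (secular_eq_zero_of_isBoundState hT hk hf)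
end

section
/- For a smooth function h : ℝ → ℝ and constant ξ, the function φ(t,x) = h(t−x) satisfies the wave equation ∂_t²φ − ∂_x²φ = 0, and its energy density T_tt = (1−2ξ)(h'(t−x))² − 2ξ h''(t−x) h(t−x). If h is chosen C² with h(0) > 0, h'(0) = 0, and h''(0) > 0 (e.g., h(u) = 1 + u²), then T_tt < 0 at all points with t = x; in particular the pointwise weak energy condition fails for ξ > 0. -/
theorem stmt_14 (h : ℝ → ℝ) (hh : ContDiff ℝ (⊤ : ℕ∞) h) (ξ : ℝ) (hξ : 0 < ξ)
    (h0 : 0 < h 0) (h1 : deriv h 0 = 0) (h2 : 0 < deriv (deriv h) 0) :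
    (∀ t x : ℝ,
      deriv (deriv (fun s => h (s - x))) t - deriv (deriv (fun y => h (t - y))) x = 0) ∧
    (∀ t x : ℝ, t = x →
      (1 - 2*ξ) * (deriv h (t - x))^2 - 2 * ξ * deriv (deriv h) (t - x) * h (t - x) < 0) := by
  constructor
  · intro t x
    have e1 : (deriv (fun s => h (s - x))) = fun s => deriv h (s - x) := by
      funext s; exact deriv_comp_sub_const h x s
    have e2 : (deriv (fun y => h (t - y))) = fun y => -deriv h (t - y) := by
      funext y; exact deriv_comp_const_sub h t y
    rw [e1, e2]
    have e3 : deriv (fun s => deriv h (s - x)) t = deriv (deriv h) (t - x) :=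
      deriv_comp_sub_const (deriv h) x t
    have e4 : deriv (fun y => -deriv h (t - y)) x = deriv (deriv h) (t - x) := by
      rw [deriv.fun_neg, deriv_comp_const_sub (deriv h) t x]; ring
    rw [e3, e4, sub_self]
  · intro t x htx
    have : t - x = 0 := by rw [htx, sub_self]
    rw [this, h1]
    nlinarith [mul_pos (mul_pos hξ h2) h0]
end

section
/- Let f : ℝ → ℝ be C² with compact support, φ : ℝ → ℝ be C², ξ ∈ [0,1/4], and let r : ℝ → ℝ be continuous (representing R_{μν}γ̇^μγ̇^ν along a null geodesic). Then ∫ ((1−2ξ)(φ')² − 2ξφφ'' − ξ r φ²) f² dλ ≥ −2ξ ∫ ((f')² + (1/2) r f²) φ² dλ. -/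
open MeasureTheory
set_option maxHeartbeats 1000000

lemma integral_deriv_zero_of_compactSupport (g : ℝ → ℝ) (hg : ContDiff ℝ 1 g)
    (hgc : HasCompactSupport g) : ∫ x : ℝ, deriv g x = 0 := by
  have hint : Integrable (deriv g) :=
    (hg.continuous_deriv le_rfl).integrable_of_hasCompactSupport hgc.deriv
  have h1 := hgc.integral_Ioi_deriv_eq hg 0
  have h2 := hgc.integral_Iic_deriv_eq hg 0
  rw [← intervalIntegral.integral_Iic_add_Ioi hint.integrableOn hint.integrableOn, h1, h2]
  ring

theorem stmt_15 (f φ r : ℝ → ℝ) (hf : ContDiff ℝ 2 f) (hfc : HasCompactSupport f)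
    (hφ : ContDiff ℝ 2 φ) (hr : Continuous r)
    (ξ : ℝ) (hξ0 : 0 ≤ ξ) (hξ1 : ξ ≤ 1/4) :
    (∫ l : ℝ, ((1 - 2*ξ) * (deriv φ l)^2 - 2 * ξ * φ l * deriv (deriv φ) l
        - ξ * r l * (φ l)^2) * (f l)^2)
      ≥ -2 * ξ * ∫ l : ℝ, ((deriv f l)^2 + (r l / 2) * (f l)^2) * (φ l)^2 := by
  have h21 : (2 : WithTop ℕ∞) = 1 + 1 := by norm_num
  have hφ' : ContDiff ℝ 1 (deriv φ) := (contDiff_succ_iff_deriv.mp (h21 ▸ hφ)).2.2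
  have hf' : ContDiff ℝ 1 (deriv f) := (contDiff_succ_iff_deriv.mp (h21 ▸ hf)).2.2
  have hφ1 : ContDiff ℝ 1 φ := hφ.of_le (by norm_num)
  have hf1 : ContDiff ℝ 1 f := hf.of_le (by norm_num)
  have hφd : Differentiable ℝ φ := hφ1.differentiable one_ne_zero
  have hfd : Differentiable ℝ f := hf1.differentiable one_ne_zero
  have hφ'd : Differentiable ℝ (deriv φ) := hφ'.differentiable one_ne_zero
  have hφc : Continuous φ := hφd.continuous
  have hfcon : Continuous f := hfd.continuous
  have hφ'c : Continuous (deriv φ) := hφ'd.continuous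
  have hf'c : Continuous (deriv f) := hf'.continuous
  have hφ''c : Continuous (deriv (deriv φ)) := hφ'.continuous_deriv le_rfl
  -- auxiliary function g = φ * φ' * f^2
  set g : ℝ → ℝ := fun l => φ l * deriv φ l * (f l)^2 with hg_def
  have hgC : ContDiff ℝ 1 g := (hφ1.mul hφ').mul (hf1.pow 2)
  have hsq : HasCompactSupport (fun l => (f l)^2) :=
    hfc.comp_left (g := fun x : ℝ => x ^ 2) (by simp)
  have hsq' : HasCompactSupport (fun l => (deriv f l)^2) :=
    hfc.deriv.comp_left (g := fun x : ℝ => x ^ 2) (by simp)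
  have hgc : HasCompactSupport g :=
    hsq.mul_left
  -- derivative of g
  have hD : ∀ l, deriv g l = (deriv φ l)^2 * (f l)^2 + φ l * deriv (deriv φ) l * (f l)^2
      + 2 * φ l * deriv φ l * f l * deriv f l := by
    intro l
    have h1 : HasDerivAt g
        ((deriv φ l * deriv φ l + φ l * deriv (deriv φ) l) * (f l)^2
          + (φ l * deriv φ l) * (2 * f l ^ 1 * deriv f l)) l := by
      exact (((hφd l).hasDerivAt.mul (hφ'd l).hasDerivAt).mul
        (((hfd l).hasDerivAt.pow 2)))
    rw [h1.deriv]; ring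
  -- the three integrands
  set A : ℝ → ℝ := fun l => ((1 - 2*ξ) * (deriv φ l)^2 - 2 * ξ * φ l * deriv (deriv φ) l
      - ξ * r l * (φ l)^2) * (f l)^2 with hA_def
  set B : ℝ → ℝ := fun l => ((deriv f l)^2 + (r l / 2) * (f l)^2) * (φ l)^2 with hB_def
  have hAcont : Continuous A := by fun_prop
  have hBcont : Continuous B := by fun_prop
  have hAcs : HasCompactSupport A :=
    hsq.mul_left
  have hBcs : HasCompactSupport B := by
    apply HasCompactSupport.mul_right
    exact hsq'.add hsq.mul_left
  have hAint : Integrable A := hAcont.integrable_of_hasCompactSupport hAcs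
  have hBint : Integrable B := hBcont.integrable_of_hasCompactSupport hBcs
  have hDint : Integrable (deriv g) :=
    (hgC.continuous_deriv le_rfl).integrable_of_hasCompactSupport hgc.deriv
  -- the key inequality pointwise
  have key : 0 ≤ ∫ l : ℝ, (A l + 2*ξ*B l + 2*ξ*deriv g l) := by
    apply integral_nonneg
    intro l
    simp only [hA_def, hB_def, Pi.zero_apply]
    rw [hD l]
    nlinarith [sq_nonneg (deriv φ l * f l + 2*ξ*deriv f l*φ l),
      mul_nonneg (mul_nonneg hξ0 (by linarith : (0:ℝ) ≤ 1 - 2*ξ))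
        (sq_nonneg (deriv f l * φ l))]
  have hzero : ∫ x : ℝ, deriv g x = 0 :=
    integral_deriv_zero_of_compactSupport g hgC hgc
  have e1 : ∫ l : ℝ, (A l + 2*ξ*B l + 2*ξ*deriv g l)
      = (∫ l : ℝ, A l + 2*ξ*B l) + ∫ l : ℝ, 2*ξ*deriv g l :=
    integral_add (hAint.add (hBint.const_mul _)) (hDint.const_mul _)
  have e2 : ∫ l : ℝ, (A l + 2*ξ*B l) = (∫ l : ℝ, A l) + ∫ l : ℝ, 2*ξ*B l :=
    integral_add hAint (hBint.const_mul _)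
  have e3 : ∫ l : ℝ, 2*ξ*B l = 2*ξ*∫ l : ℝ, B l := integral_const_mul _ _
  have e4 : ∫ l : ℝ, 2*ξ*deriv g l = 2*ξ*∫ l : ℝ, deriv g l := integral_const_mul _ _
  rw [e1, e2, e3, e4, hzero] at key
  linarith
end
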